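/- arXiv:2205.07620 — 4 statements merged into one kernel-verified Lean document; each statement's English description precedes it below -/
import Mathlib

section
/- (Proposition 1, part 2.) Along the bidirectional optimisation scheme, if the aggregated demand changes between two consecutive iterations, the cost strictly decreases: if z̄^{ℓ+1} ≠ z̄^ℓ for some ℓ ≥ 1, then J^{ℓ+1} < J^ℓ. -/
open scoped BigOperators

/-- Net power that microgrid `κ` receives/provides under exchange strategy `δ`:
`Δ_κ(δ)(n) = Σ_{ν : Edge κ ν} λ_{κν} (δ_{κν}(n) − η_{κν} δ_{νκ}(n))`. -/
noncomputable def netExchange {M N : ℕ} (Edge : Fin M → Fin M → Prop) [DecidableRel Edge]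
    (lam eta : Fin M → Fin M → ℝ)
    (δ : Fin M → Fin M → Fin N → ℝ) (κ : Fin M) : Fin N → ℝ :=
  fun n => ∑ ν ∈ Finset.univ.filter (fun ν => Edge κ ν),
    lam κ ν * (δ κ ν n - eta κ ν * δ ν κ n)

/-- Overall load-shaping cost `J(z̄, δ) = Σ_κ ‖ζ_κ − z̄_κ − Δ_κ(δ)‖₂²`. -/
noncomputable def cost {M N : ℕ} (Edge : Fin M → Fin M → Prop) [DecidableRel Edge]
    (lam eta : Fin M → Fin M → ℝ) (ζ : Fin M → Fin N → ℝ)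
    (z : Fin M → Fin N → ℝ) (δ : Fin M → Fin M → Fin N → ℝ) : ℝ :=
  ∑ κ, ∑ n, (ζ κ n - z κ n - netExchange Edge lam eta δ κ n) ^ 2

/-- Feasible exchange strategies `D^δ`: nonnegativity and the line-limit constraint
`δ_{κν}(n) + δ_{νκ}(n) ≤ 1` for every transmission line. -/
def feasibleExchange {M N : ℕ} (Edge : Fin M → Fin M → Prop)
    (δ : Fin M → Fin M → Fin N → ℝ) : Prop :=
  ∀ κ ν, Edge κ ν → ∀ n, 0 ≤ δ κ ν n ∧ δ κ ν n + δ ν κ n ≤ 1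

/-- Proposition 1, part 2: if the aggregated demand changes between two consecutive
iterations of the bidirectional optimisation scheme, i.e. `z̄^{ℓ+1} ≠ z̄^ℓ` for some
`ℓ ≥ 1`, then the cost strictly decreases: `J^{ℓ+1} < J^ℓ`. -/
theorem bidirectional_scheme_strict_decrease
    {M N : ℕ} (hM : 1 ≤ M) (hN : 1 ≤ N)
    (Edge : Fin M → Fin M → Prop) [DecidableRel Edge]
    (hEdgeSymm : ∀ κ ν, Edge κ ν → Edge ν κ)
    (lam eta : Fin M → Fin M → ℝ)
    (hlamSymm : ∀ κ ν, lam κ ν = lam ν κ)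
    (hlamNonneg : ∀ κ ν, 0 ≤ lam κ ν)
    (hetaSymm : ∀ κ ν, eta κ ν = eta ν κ)
    (heta : ∀ κ ν, Edge κ ν → 0 < eta κ ν ∧ eta κ ν ≤ 1)
    (ζ : Fin M → Fin N → ℝ)
    (Dbar : Fin M → Set (Fin N → ℝ))
    (hDne : ∀ κ, (Dbar κ).Nonempty)
    (hDcpt : ∀ κ, IsCompact (Dbar κ))
    (hDcvx : ∀ κ, Convex ℝ (Dbar κ))
    (z : ℕ → Fin M → Fin N → ℝ)
    (δ : ℕ → Fin M → Fin M → Fin N → ℝ)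
    (hz1 : ∀ κ, z 1 κ ∈ Dbar κ)
    -- `δ^ℓ` minimises `J(z̄^ℓ, ·)` over `D^δ`
    (hδmin : ∀ ℓ, 1 ≤ ℓ → feasibleExchange Edge (δ ℓ) ∧
      ∀ δ', feasibleExchange Edge δ' →
        cost Edge lam eta ζ (z ℓ) (δ ℓ) ≤ cost Edge lam eta ζ (z ℓ) δ')
    -- `z̄^{ℓ+1}` minimises `J(·, δ^ℓ)` over `D̄`
    (hzmin : ∀ ℓ, 1 ≤ ℓ → (∀ κ, z (ℓ + 1) κ ∈ Dbar κ) ∧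
      ∀ z', (∀ κ, z' κ ∈ Dbar κ) →
        cost Edge lam eta ζ (z (ℓ + 1)) (δ ℓ) ≤ cost Edge lam eta ζ z' (δ ℓ)) :
    ∀ ℓ, 1 ≤ ℓ → z (ℓ + 1) ≠ z ℓ →
      cost Edge lam eta ζ (z (ℓ + 1)) (δ (ℓ + 1)) <
        cost Edge lam eta ζ (z ℓ) (δ ℓ) := by
  intro ℓ hℓ hne
  obtain ⟨hδfeas1, hδopt1⟩ := hδmin (ℓ + 1) (by omega)
  obtain ⟨hδfeas0, _⟩ := hδmin ℓ hℓ
  obtain ⟨hzfeas, hzopt⟩ := hzmin ℓ hℓ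
  -- z ℓ is in the feasible set
  have hzℓ : ∀ κ, z ℓ κ ∈ Dbar κ := by
    match ℓ, hℓ with
    | 1, _ => exact hz1
    | (m + 2), _ => exact (hzmin (m + 1) (by omega)).1
  set a := z (ℓ + 1) with ha
  set b := z ℓ with hb
  set dd := δ ℓ with hdd
  -- step 1: δ update does not increase cost
  have h1 : cost Edge lam eta ζ a (δ (ℓ + 1)) ≤ cost Edge lam eta ζ a dd :=
    hδopt1 dd hδfeas0
  -- midpoint
  set m : Fin M → Fin N → ℝ := fun κ n => (a κ n + b κ n) / 2 with hm
  have hmfeas : ∀ κ, m κ ∈ Dbar κ := by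
    intro κ
    have := (hDcvx κ) (hzfeas κ) (hzℓ κ) (by norm_num : (0:ℝ) ≤ 1/2)
      (by norm_num : (0:ℝ) ≤ 1/2) (by norm_num)
    convert this using 1
    funext n
    simp [hm, Pi.smul_apply, smul_eq_mul]
    ring
  set S : ℝ := ∑ κ, ∑ n, (a κ n - b κ n) ^ 2 with hS
  have key : cost Edge lam eta ζ m dd =
      (cost Edge lam eta ζ a dd + cost Edge lam eta ζ b dd) / 2 - S / 4 := by
    unfold cost
    rw [hS, ← Finset.sum_add_distrib, Finset.sum_div, Finset.sum_div,
      ← Finset.sum_sub_distrib]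
    refine Finset.sum_congr rfl fun κ _ => ?_
    rw [← Finset.sum_add_distrib, Finset.sum_div, Finset.sum_div,
      ← Finset.sum_sub_distrib]
    refine Finset.sum_congr rfl fun n _ => ?_
    show (ζ κ n - (a κ n + b κ n) / 2 - _) ^ 2 = _
    ring
  have hSpos : 0 < S := by
    have hex : ∃ κ n, a κ n ≠ b κ n := by
      by_contra h
      push_neg at h
      exact hne (funext fun κ => funext fun n => h κ n)
    obtain ⟨κ₀, n₀, hκn⟩ := hex
    have hκpos : 0 < ∑ n, (a κ₀ n - b κ₀ n) ^ 2 := by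
      refine Finset.sum_pos' (fun n _ => sq_nonneg _) ⟨n₀, Finset.mem_univ _, ?_⟩
      have hne0 : a κ₀ n₀ - b κ₀ n₀ ≠ 0 := sub_ne_zero_of_ne hκn
      positivity
    exact Finset.sum_pos' (fun κ _ => Finset.sum_nonneg fun n _ => sq_nonneg _)
      ⟨κ₀, Finset.mem_univ _, hκpos⟩
  have h2 : cost Edge lam eta ζ a dd ≤ cost Edge lam eta ζ m dd := hzopt m hmfeas
  have h3 : cost Edge lam eta ζ a dd ≤ cost Edge lam eta ζ b dd := hzopt b hzℓ
  have h4 : cost Edge lam eta ζ a dd < cost Edge lam eta ζ b dd := by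
    rw [key] at h2; linarith
  linarith
end

section
/- (Main Theorem.) The infimum of the cost values generated by the bidirectional optimisation scheme equals the optimal value of the full bilevel problem: inf_{ℓ ≥ 1} J^ℓ = min_{(z̄,δ) ∈ D̄ × D^δ} J(z̄, δ). In particular, the non-increasing sequence (J^ℓ) converges to the global optimal value J⋆ of the problem min_{(z̄,δ) ∈ D̄ × D^δ} J(z̄, δ). -/
/-!
Flattening profiles into `ℓ²(Fin M × Fin N)`, the cost is `J(z̄, δ) = ‖a(z̄) - b(δ)‖²` with
`a(z̄) = ζ - z̄` ranging over a compact convex set `X` and `b(δ) = Δ(δ)` over a compact convex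
set `W`, the linear image of a polytope. The scheme is then alternating projection between `X`
and `W`: the distances `‖a^ℓ - b^ℓ‖` decrease, and every cluster point `(p, q)` of
`(a^{ℓ+1}, b^ℓ)` is a pair of mutually nearest points. For convex sets such a pair realises
the distance between `X` and `W`: adding the variational inequalities
`⟪q - p, u - p⟫ ≤ 0` and `⟪p - q, v - q⟫ ≤ 0` gives `‖p - q‖² ≤ ⟪p - q, u - v⟫`.
-/

open scoped BigOperators

open Filter Topology
open scoped RealInnerProductSpace

section AlternatingMinimization

variable {F : Type*} [NormedAddCommGroup F] [InnerProductSpace ℝ F]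

theorem real_inner_sub_nonpos_of_forall_norm_sub_le {K : Set F} (hK : Convex ℝ K) {u v : F}
    (hv : v ∈ K) (hmin : ∀ w ∈ K, ‖u - v‖ ≤ ‖u - w‖) : ∀ w ∈ K, ⟪u - v, w - v⟫ ≤ 0 := by
  have : Nonempty K := ⟨⟨v, hv⟩⟩
  refine (norm_eq_iInf_iff_real_inner_le_zero hK hv).mp
    (le_antisymm (le_ciInf fun w => hmin w w.2) ?_)
  exact ciInf_le ⟨0, Set.forall_mem_range.2 fun _ => norm_nonneg _⟩ (⟨v, hv⟩ : K)

theorem norm_sub_le_of_mutually_nearest {X W : Set F} (hX : Convex ℝ X) (hW : Convex ℝ W)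
    {p q : F} (hp : p ∈ X) (hq : q ∈ W) (hpq : ∀ u ∈ X, ‖p - q‖ ≤ ‖u - q‖)
    (hqp : ∀ v ∈ W, ‖p - q‖ ≤ ‖p - v‖) {u v : F} (hu : u ∈ X) (hv : v ∈ W) :
    ‖p - q‖ ≤ ‖u - v‖ := by
  have hpu : ⟪q - p, u - p⟫ ≤ 0 := real_inner_sub_nonpos_of_forall_norm_sub_le hX hp
    (fun w hw => by simpa only [norm_sub_rev q] using hpq w hw) u hu
  have hqv : ⟪p - q, v - q⟫ ≤ 0 := real_inner_sub_nonpos_of_forall_norm_sub_le hW hq hqp v hv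
  have key : ‖p - q‖ ^ 2 ≤ ‖p - q‖ * ‖u - v‖ := calc
    ‖p - q‖ ^ 2 ≤ ⟪p - q, p - q⟫ - ⟪q - p, u - p⟫ - ⟪p - q, v - q⟫ := by
      rw [real_inner_self_eq_norm_sq]; linarith
    _ = ⟪p - q, u - v⟫ := by
      simp only [inner_sub_left, inner_sub_right, real_inner_comm]; ring
    _ ≤ ‖p - q‖ * ‖u - v‖ := real_inner_le_norm _ _
  nlinarith [norm_nonneg (p - q), norm_nonneg (u - v)]

theorem exists_tendsto_norm_sub_of_alternating_nearest {X W : Set F}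
    (hXc : IsCompact X) (hXv : Convex ℝ X) (hWc : IsCompact W) (hWv : Convex ℝ W)
    {a b : ℕ → F} (ha : ∀ k, a k ∈ X) (hb : ∀ k, b k ∈ W)
    (hb_near : ∀ k, ∀ v ∈ W, ‖a k - b k‖ ≤ ‖a k - v‖)
    (ha_near : ∀ k, ∀ u ∈ X, ‖a (k + 1) - b k‖ ≤ ‖u - b k‖) :
    ∃ p ∈ X, ∃ q ∈ W, (∀ u ∈ X, ∀ v ∈ W, ‖p - q‖ ≤ ‖u - v‖) ∧
      Tendsto (fun k => ‖a k - b k‖) atTop (𝓝 ‖p - q‖) := by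
  set d : ℕ → ℝ := fun k => ‖a k - b k‖
  set L := ⨅ k, d k
  have hd : Tendsto d atTop (𝓝 L) :=
    tendsto_atTop_ciInf (antitone_nat_of_succ_le fun k =>
      (hb_near (k + 1) _ (hb k)).trans (ha_near k _ (ha k)))
      ⟨0, Set.forall_mem_range.2 fun _ => norm_nonneg _⟩
  obtain ⟨⟨p, q⟩, ⟨hp, hq⟩, φ, hφ, hlim⟩ :=
    (hXc.prod hWc).tendsto_subseq (x := fun k => (a (k + 1), b k)) fun k => ⟨ha _, hb _⟩
  have hpφ : Tendsto (fun k => a (φ k + 1)) atTop (𝓝 p) := (continuous_fst.tendsto _).comp hlim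
  have hqφ : Tendsto (fun k => b (φ k)) atTop (𝓝 q) := (continuous_snd.tendsto _).comp hlim
  have hpq_le : ‖p - q‖ ≤ L := le_of_tendsto_of_tendsto' (hpφ.sub hqφ).norm
    (hd.comp hφ.tendsto_atTop) fun k => ha_near (φ k) _ (ha (φ k))
  have hL_le : ∀ v ∈ W, L ≤ ‖p - v‖ := fun v hv => le_of_tendsto_of_tendsto'
    (hd.comp ((tendsto_add_atTop_nat 1).comp hφ.tendsto_atTop))
    (hpφ.sub tendsto_const_nhds).norm fun k => hb_near _ v hv
  have hp_near : ∀ u ∈ X, ‖p - q‖ ≤ ‖u - q‖ := fun u hu => le_of_tendsto_of_tendsto'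
    (hpφ.sub hqφ).norm (tendsto_const_nhds.sub hqφ).norm fun k => ha_near _ u hu
  have hL : L = ‖p - q‖ := (hL_le q hq).antisymm hpq_le
  exact ⟨p, hp, q, hq, fun u hu v hv => norm_sub_le_of_mutually_nearest hXv hWv hp hq hp_near
    (fun v hv => hL ▸ hL_le v hv) hu hv, hL ▸ hd⟩

theorem exists_tendsto_of_alternating_minimization {α β : Type*} {S : Set α} {T : Set β}
    {J : α → β → ℝ} {f : α → F} {g : β → F} (hJ : ∀ s t, J s t = ‖f s - g t‖ ^ 2)
    (hSc : IsCompact (f '' S)) (hSv : Convex ℝ (f '' S))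
    (hTc : IsCompact (g '' T)) (hTv : Convex ℝ (g '' T))
    {x : ℕ → α} {y : ℕ → β} (hx : ∀ k, x k ∈ S) (hy : ∀ k, y k ∈ T)
    (hy_min : ∀ k, ∀ t ∈ T, J (x k) (y k) ≤ J (x k) t)
    (hx_min : ∀ k, ∀ s ∈ S, J (x (k + 1)) (y k) ≤ J s (y k)) :
    ∃ s ∈ S, ∃ t ∈ T, (∀ s' ∈ S, ∀ t' ∈ T, J s t ≤ J s' t') ∧
      Tendsto (fun k => J (x k) (y k)) atTop (𝓝 (J s t)) := by
  simp only [hJ, pow_le_pow_iff_left₀ (norm_nonneg _) (norm_nonneg _) two_ne_zero]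
    at hy_min hx_min ⊢
  obtain ⟨_, ⟨s, hs, rfl⟩, _, ⟨t, ht, rfl⟩, hmin, hlim⟩ :=
    exists_tendsto_norm_sub_of_alternating_nearest hSc hSv hTc hTv
      (fun k => Set.mem_image_of_mem f (hx k)) (fun k => Set.mem_image_of_mem g (hy k))
      (by rintro k _ ⟨t, ht, rfl⟩; exact hy_min k t ht)
      (by rintro k _ ⟨s, hs, rfl⟩; exact hx_min k s hs)
  exact ⟨s, hs, t, ht, fun s' hs' t' ht' => hmin _ ⟨s', hs', rfl⟩ _ ⟨t', ht', rfl⟩, hlim.pow 2⟩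

end AlternatingMinimization

section Microgrid

/-- `α → β → ℝ` carries the sup norm; `cost` is a squared distance in the Euclidean norm. -/
def flatten (α β : Type*) : (α → β → ℝ) →ₗ[ℝ] EuclideanSpace ℝ (α × β) where
  toFun f := WithLp.toLp 2 (Function.uncurry f)
  map_add' _ _ := rfl
  map_smul' _ _ := rfl

theorem norm_flatten_sq {α β : Type*} [Fintype α] [Fintype β] (f : α → β → ℝ) :
    ‖flatten α β f‖ ^ 2 = ∑ i, ∑ j, f i j ^ 2 := by
  rw [EuclideanSpace.real_norm_sq_eq, Fintype.sum_prod_type]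
  rfl

theorem IsCompact.flatten_sub_image {α β : Type*} [Fintype α] [Fintype β]
    {S : Set (α → β → ℝ)} (hS : IsCompact S) (ζ : α → β → ℝ) :
    IsCompact ((flatten α β ∘ (ζ - ·)) '' S) :=
  hS.image ((flatten α β).continuous_of_finiteDimensional.comp (by fun_prop))

theorem Convex.flatten_sub_image {α β : Type*} {S : Set (α → β → ℝ)} (hS : Convex ℝ S)
    (ζ : α → β → ℝ) : Convex ℝ ((flatten α β ∘ (ζ - ·)) '' S) := by
  rw [Set.image_comp, ← Set.singleton_sub]
  exact ((convex_singleton ζ).sub hS).linear_image _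

variable {M N : ℕ} (Edge : Fin M → Fin M → Prop)

theorem convex_setOf_feasibleExchange :
    Convex ℝ {δ : Fin M → Fin M → Fin N → ℝ | feasibleExchange Edge δ} := by
  rintro δ₁ h₁ δ₂ h₂ a b ha hb hab κ ν hE n
  obtain ⟨h₁0, h₁1⟩ := h₁ κ ν hE n
  obtain ⟨h₂0, h₂1⟩ := h₂ κ ν hE n
  simp only [Pi.add_apply, Pi.smul_apply, smul_eq_mul]
  constructor <;> nlinarith

theorem isClosed_setOf_feasibleExchange :
    IsClosed {δ : Fin M → Fin M → Fin N → ℝ | feasibleExchange Edge δ} := by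
  simp only [feasibleExchange, Set.ofPred_forall, Set.ofPred_and]
  exact isClosed_iInter fun κ => isClosed_iInter fun ν => isClosed_iInter fun _ =>
    isClosed_iInter fun n => (isClosed_le continuous_const (by fun_prop)).inter
      (isClosed_le (by fun_prop) continuous_const)

variable [DecidableRel Edge] (lam eta : Fin M → Fin M → ℝ)

noncomputable def netExchangeLinear : (Fin M → Fin M → Fin N → ℝ) →ₗ[ℝ] (Fin M → Fin N → ℝ) where
  toFun := netExchange Edge lam eta
  map_add' δ δ' := by
    ext κ n
    simp only [netExchange, Pi.add_apply, ← Finset.sum_add_distrib]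
    exact Finset.sum_congr rfl fun _ _ => by ring
  map_smul' c δ := by
    ext κ n
    simp only [netExchange, Pi.smul_apply, smul_eq_mul, RingHom.id_apply, Finset.mul_sum]
    exact Finset.sum_congr rfl fun _ _ => by ring

theorem cost_eq_norm_sq (ζ z : Fin M → Fin N → ℝ) (δ : Fin M → Fin M → Fin N → ℝ) :
    cost Edge lam eta ζ z δ =
      ‖flatten _ _ (ζ - z) - flatten _ _ (netExchangeLinear Edge lam eta δ)‖ ^ 2 := by
  rw [← map_sub, norm_flatten_sq]
  rfl

variable {Edge} in
/-- `D^δ` is unbounded off the lines; this truncation makes its image under `netExchange` compact. -/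
theorem exists_mem_Icc_netExchange_eq (hEdgeSymm : ∀ κ ν, Edge κ ν → Edge ν κ)
    {δ : Fin M → Fin M → Fin N → ℝ} (hδ : feasibleExchange Edge δ) :
    ∃ δ' ∈ Set.Icc 0 1, feasibleExchange Edge δ' ∧
      netExchange Edge lam eta δ' = netExchange Edge lam eta δ := by
  refine ⟨fun κ ν n => if Edge κ ν then δ κ ν n else 0, ⟨fun κ ν n => ?_, fun κ ν n => ?_⟩,
    fun κ ν h n => ?_, ?_⟩
  · simp only [Pi.zero_apply]
    split_ifs with h
    exacts [(hδ κ ν h n).1, le_rfl]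
  · simp only [Pi.one_apply]
    split_ifs with h
    exacts [by linarith [(hδ κ ν h n).2, (hδ ν κ (hEdgeSymm κ ν h) n).1], zero_le_one]
  · simp only [if_pos h, if_pos (hEdgeSymm κ ν h)]
    exact hδ κ ν h n
  · ext κ n
    refine Finset.sum_congr rfl fun ν hν => ?_
    have h := (Finset.mem_filter.1 hν).2
    simp only [if_pos h, if_pos (hEdgeSymm κ ν h)]

variable {Edge} in
theorem isCompact_flatten_netExchange_image (hEdgeSymm : ∀ κ ν, Edge κ ν → Edge ν κ) :
    IsCompact ((flatten _ _ ∘ netExchangeLinear Edge lam eta) ''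
      {δ : Fin M → Fin M → Fin N → ℝ | feasibleExchange Edge δ}) := by
  have h : netExchangeLinear Edge lam eta '' {δ | feasibleExchange Edge δ} =
      netExchangeLinear Edge lam eta ''
        ({δ : Fin M → Fin M → Fin N → ℝ | feasibleExchange Edge δ} ∩ Set.Icc 0 1) := by
    refine (Set.image_mono Set.inter_subset_left).antisymm' ?_
    rintro _ ⟨δ, hδ, rfl⟩
    obtain ⟨δ', hδ'01, hδ', heq⟩ := exists_mem_Icc_netExchange_eq lam eta hEdgeSymm hδ
    exact ⟨δ', ⟨hδ', hδ'01⟩, heq⟩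
  rw [Set.image_comp, h]
  exact ((isCompact_Icc.inter_left (isClosed_setOf_feasibleExchange Edge)).image
    (netExchangeLinear Edge lam eta).continuous_of_finiteDimensional).image
      (flatten _ _).continuous_of_finiteDimensional

theorem convex_flatten_netExchange_image :
    Convex ℝ ((flatten _ _ ∘ netExchangeLinear Edge lam eta) ''
      {δ : Fin M → Fin M → Fin N → ℝ | feasibleExchange Edge δ}) := by
  rw [Set.image_comp]
  exact ((convex_setOf_feasibleExchange Edge).linear_image _).linear_image _

end Microgrid

theorem bidirectional_scheme_global_convergence_general
    {M N : ℕ}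
    (Edge : Fin M → Fin M → Prop) [DecidableRel Edge]
    (hEdgeSymm : ∀ κ ν, Edge κ ν → Edge ν κ)
    (lam eta : Fin M → Fin M → ℝ)
    (ζ : Fin M → Fin N → ℝ)
    (Dbar : Fin M → Set (Fin N → ℝ))
    (hDcpt : ∀ κ, IsCompact (Dbar κ))
    (hDcvx : ∀ κ, Convex ℝ (Dbar κ))
    (z : ℕ → Fin M → Fin N → ℝ)
    (δ : ℕ → Fin M → Fin M → Fin N → ℝ)
    (hz1 : ∀ κ, z 1 κ ∈ Dbar κ)
    -- `δ^ℓ` minimises `J(z̄^ℓ, ·)` over `D^δ`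
    (hδmin : ∀ ℓ, 1 ≤ ℓ → feasibleExchange Edge (δ ℓ) ∧
      ∀ δ', feasibleExchange Edge δ' →
        cost Edge lam eta ζ (z ℓ) (δ ℓ) ≤ cost Edge lam eta ζ (z ℓ) δ')
    -- `z̄^{ℓ+1}` minimises `J(·, δ^ℓ)` over `D̄`
    (hzmin : ∀ ℓ, 1 ≤ ℓ → (∀ κ, z (ℓ + 1) κ ∈ Dbar κ) ∧
      ∀ z', (∀ κ, z' κ ∈ Dbar κ) →
        cost Edge lam eta ζ (z (ℓ + 1)) (δ ℓ) ≤ cost Edge lam eta ζ z' (δ ℓ)) :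
    ∃ Jstar : ℝ,
      -- `Jstar` is the global optimal value of the full problem (the minimum is attained)
      IsLeast {c : ℝ | ∃ z' δ', (∀ κ, z' κ ∈ Dbar κ) ∧ feasibleExchange Edge δ' ∧
        c = cost Edge lam eta ζ z' δ'} Jstar ∧
      -- `Jstar` is the infimum of the cost values generated by the scheme
      IsGLB {c : ℝ | ∃ ℓ, 1 ≤ ℓ ∧ c = cost Edge lam eta ζ (z ℓ) (δ ℓ)} Jstar ∧
      -- and the cost sequence converges to `Jstar`
      Filter.Tendsto (fun ℓ => cost Edge lam eta ζ (z (ℓ + 1)) (δ (ℓ + 1)))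
        Filter.atTop (nhds Jstar) := by
  have hz : ∀ k, z (k + 1) ∈ Set.univ.pi Dbar
    | 0 => Set.mem_univ_pi.2 hz1
    | k + 1 => Set.mem_univ_pi.2 (hzmin (k + 1) k.succ_pos).1
  obtain ⟨z₀, hz₀, δ₀, hδ₀, hmin, hlim⟩ := exists_tendsto_of_alternating_minimization
    (cost_eq_norm_sq Edge lam eta ζ)
    ((isCompact_univ_pi hDcpt).flatten_sub_image ζ)
    ((convex_pi fun κ _ => hDcvx κ).flatten_sub_image ζ)
    (isCompact_flatten_netExchange_image lam eta hEdgeSymm)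
    (convex_flatten_netExchange_image Edge lam eta)
    hz (fun k => (hδmin (k + 1) k.succ_pos).1) (fun k => (hδmin (k + 1) k.succ_pos).2)
    (fun k z' hz' => (hzmin (k + 1) k.succ_pos).2 z' (Set.mem_univ_pi.1 hz'))
  refine ⟨_, ⟨⟨z₀, δ₀, Set.mem_univ_pi.1 hz₀, hδ₀, rfl⟩, ?_⟩, ⟨?_, ?_⟩, hlim⟩
  · rintro _ ⟨z', δ', hz', hδ', rfl⟩
    exact hmin z' (Set.mem_univ_pi.2 hz') δ' hδ'
  · rintro _ ⟨ℓ, hℓ, rfl⟩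
    obtain ⟨k, rfl⟩ := Nat.exists_eq_add_of_le' hℓ
    exact hmin _ (hz k) _ (hδmin _ hℓ).1
  · exact fun c hc => ge_of_tendsto' hlim fun k => hc ⟨k + 1, k.succ_pos, rfl⟩

/-- Main Theorem: the infimum of the cost values `J^ℓ` (over `ℓ ≥ 1`) generated by the
bidirectional optimisation scheme equals the optimal value `J⋆` of the full bilevel
problem `min_{(z̄,δ) ∈ D̄ × D^δ} J(z̄, δ)`; in particular the non-increasing sequence
`(J^ℓ)` converges to `J⋆`. -/
theorem bidirectional_scheme_global_convergence
    {M N : ℕ} (hM : 1 ≤ M) (hN : 1 ≤ N)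
    (Edge : Fin M → Fin M → Prop) [DecidableRel Edge]
    (hEdgeSymm : ∀ κ ν, Edge κ ν → Edge ν κ)
    (lam eta : Fin M → Fin M → ℝ)
    (hlamSymm : ∀ κ ν, lam κ ν = lam ν κ)
    (hlamNonneg : ∀ κ ν, 0 ≤ lam κ ν)
    (hetaSymm : ∀ κ ν, eta κ ν = eta ν κ)
    (heta : ∀ κ ν, Edge κ ν → 0 < eta κ ν ∧ eta κ ν ≤ 1)
    (ζ : Fin M → Fin N → ℝ)
    (Dbar : Fin M → Set (Fin N → ℝ))
    (hDne : ∀ κ, (Dbar κ).Nonempty)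
    (hDcpt : ∀ κ, IsCompact (Dbar κ))
    (hDcvx : ∀ κ, Convex ℝ (Dbar κ))
    (z : ℕ → Fin M → Fin N → ℝ)
    (δ : ℕ → Fin M → Fin M → Fin N → ℝ)
    (hz1 : ∀ κ, z 1 κ ∈ Dbar κ)
    -- `δ^ℓ` minimises `J(z̄^ℓ, ·)` over `D^δ`
    (hδmin : ∀ ℓ, 1 ≤ ℓ → feasibleExchange Edge (δ ℓ) ∧
      ∀ δ', feasibleExchange Edge δ' →
        cost Edge lam eta ζ (z ℓ) (δ ℓ) ≤ cost Edge lam eta ζ (z ℓ) δ')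
    -- `z̄^{ℓ+1}` minimises `J(·, δ^ℓ)` over `D̄`
    (hzmin : ∀ ℓ, 1 ≤ ℓ → (∀ κ, z (ℓ + 1) κ ∈ Dbar κ) ∧
      ∀ z', (∀ κ, z' κ ∈ Dbar κ) →
        cost Edge lam eta ζ (z (ℓ + 1)) (δ ℓ) ≤ cost Edge lam eta ζ z' (δ ℓ)) :
    ∃ Jstar : ℝ,
      -- `Jstar` is the global optimal value of the full problem (the minimum is attained)
      IsLeast {c : ℝ | ∃ z' δ', (∀ κ, z' κ ∈ Dbar κ) ∧ feasibleExchange Edge δ' ∧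
        c = cost Edge lam eta ζ z' δ'} Jstar ∧
      -- `Jstar` is the infimum of the cost values generated by the scheme
      IsGLB {c : ℝ | ∃ ℓ, 1 ≤ ℓ ∧ c = cost Edge lam eta ζ (z ℓ) (δ ℓ)} Jstar ∧
      -- and the cost sequence converges to `Jstar`
      Filter.Tendsto (fun ℓ => cost Edge lam eta ζ (z (ℓ + 1)) (δ (ℓ + 1)))
        Filter.atTop (nhds Jstar) :=
  bidirectional_scheme_global_convergence_general Edge hEdgeSymm lam eta ζ Dbar hDcpt hDcvx z δ hz1
    hδmin hzmin
end

section
/- (General form of the convergence theorem.) Let K ⊆ ℝ^p and L ⊆ ℝ^q be nonempty, compact, convex sets, and let f : ℝ^p × ℝ^q → ℝ be convex and continuously differentiable. Suppose sequences (x^ℓ)_{ℓ≥1} ⊆ K and (y^ℓ)_{ℓ≥1} ⊆ L satisfy, for every ℓ ≥ 1: y^ℓ minimizes f(x^ℓ, ·) over L, and x^{ℓ+1} minimizes f(·, y^ℓ) over K. Then inf_{ℓ ≥ 1} f(x^ℓ, y^ℓ) = min_{(x,y) ∈ K × L} f(x, y); i.e., the alternating (block-coordinate) minimization values converge to the global minimum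 of f over K × L. -/
/-!
Along the iteration the values `f (x ℓ) (y ℓ)` decrease, and by compactness the intermediate
pairs `(x (ℓ + 1), y ℓ)` have a cluster point `(a, b)`; the values converge to `f a b`. Passing to the
limit in the two minimality conditions, `a` minimizes `f (·, b)` over `K` and `b` minimizes
`f (a, ·)` over `L`. For a differentiable convex function such a blockwise minimizer is a global
minimizer over `K × L`: both partial derivatives point uphill towards any competitor, and the
derivative splits as their sum, so the gradient inequality gives `f a b ≤ f u v`.
-/

open Set Filter Topology Function

variable {E F : Type*}

section Convex

variable [NormedAddCommGroup E] [NormedSpace ℝ E] [NormedAddCommGroup F] [NormedSpace ℝ F]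

theorem ConvexOn.le_sub_of_hasFDerivAt {φ : E → ℝ} {φ' : E →L[ℝ] ℝ} {s : Set E} {w z : E}
    (hφ : ConvexOn ℝ s φ) (hw : w ∈ s) (hz : z ∈ s) (hφ' : HasFDerivAt φ φ' w) :
    φ' (z - w) ≤ φ z - φ w := by
  let g : ℝ →ᵃ[ℝ] E := AffineMap.lineMap w z
  have hg : HasDerivAt (φ ∘ g) (φ' (z - w)) 0 := by
    have hφ'0 : HasFDerivAt φ φ' (g 0) := by simpa [g] using hφ'
    exact hφ'0.comp_hasDerivAt 0 AffineMap.hasDerivAt_lineMap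
  have h := (hφ.comp_affineMap g).le_slope_of_hasDerivAt (x := 0) (y := 1)
    (by simpa [g] using hw) (by simpa [g] using hz) zero_lt_one hg
  simpa [slope_def_field, g] using h

theorem IsMinOn.hasFDerivAt_sub_nonneg {φ : E → ℝ} {φ' : E →L[ℝ] ℝ} {s : Set E} {a z : E}
    (h : IsMinOn φ s a) (hs : Convex ℝ s) (ha : a ∈ s) (hz : z ∈ s)
    (hφ' : HasFDerivAt φ φ' a) : 0 ≤ φ' (z - a) :=
  h.localize.hasFDerivWithinAt_nonneg hφ'.hasFDerivWithinAt
    (sub_mem_posTangentConeAt_of_segment_subset (hs.segment_subset ha hz))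

theorem ConvexOn.isMinOn_prod_of_isMinOn_left_right {f : E → F → ℝ} {D : E × F →L[ℝ] ℝ}
    {K : Set E} {L : Set F} {a : E} {b : F} (hf : ConvexOn ℝ (K ×ˢ L) (uncurry f))
    (hD : HasFDerivAt (uncurry f) D (a, b)) (ha : a ∈ K) (hb : b ∈ L)
    (hleft : IsMinOn (f · b) K a) (hright : IsMinOn (f a) L b) :
    IsMinOn (uncurry f) (K ×ˢ L) (a, b) := by
  rintro ⟨u, v⟩ ⟨hu, hv⟩
  have hK : Convex ℝ K := by
    simpa [fst_image_prod _ ⟨b, hb⟩] using hf.1.linear_image (LinearMap.fst ℝ E F)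
  have hL : Convex ℝ L := by
    simpa [snd_image_prod ⟨a, ha⟩] using hf.1.linear_image (LinearMap.snd ℝ E F)
  have hleft' : IsMinOn (uncurry f) (K ×ˢ {b}) (a, b) := by
    rintro ⟨u', _⟩ ⟨hu', rfl⟩
    exact hleft hu'
  have hright' : IsMinOn (uncurry f) ({a} ×ˢ L) (a, b) := by
    rintro ⟨_, v'⟩ ⟨rfl, hv'⟩
    exact hright hv'
  have hDu : 0 ≤ D ((u, b) - (a, b)) :=
    hleft'.hasFDerivAt_sub_nonneg (hK.prod (convex_singleton b)) ⟨ha, rfl⟩ ⟨hu, rfl⟩ hD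
  have hDv : 0 ≤ D ((a, v) - (a, b)) :=
    hright'.hasFDerivAt_sub_nonneg ((convex_singleton a).prod hL) ⟨rfl, hb⟩ ⟨rfl, hv⟩ hD
  have hsplit : (u, v) - (a, b) = ((u, b) - (a, b)) + ((a, v) - (a, b)) := by
    ext <;> simp
  have hgrad := hf.le_sub_of_hasFDerivAt ⟨ha, hb⟩ ⟨hu, hv⟩ hD
  rw [hsplit, map_add] at hgrad
  change f a b ≤ f u v
  simp only [uncurry_apply_pair] at hgrad
  linarith

end Convex

structure IsAlternatingMinimization (f : E → F → ℝ) (K : Set E) (L : Set F) (x : ℕ → E)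
    (y : ℕ → F) : Prop where
  mem_left : ∀ n, x n ∈ K
  mem_right : ∀ n, y n ∈ L
  isMinOn_right : ∀ n, IsMinOn (f (x n)) L (y n)
  isMinOn_left : ∀ n, IsMinOn (f · (y n)) K (x (n + 1))

namespace IsAlternatingMinimization

variable {f : E → F → ℝ} {K : Set E} {L : Set F} {x : ℕ → E} {y : ℕ → F}

theorem antitone (h : IsAlternatingMinimization f K L x y) :
    Antitone fun n ↦ f (x n) (y n) :=
  antitone_nat_of_succ_le fun n ↦
    calc f (x (n + 1)) (y (n + 1)) ≤ f (x (n + 1)) (y n) := h.isMinOn_right (n + 1) (h.mem_right n)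
      _ ≤ f (x n) (y n) := h.isMinOn_left n (h.mem_left n)

variable [TopologicalSpace E] [TopologicalSpace F]

theorem tendsto_iInf (h : IsAlternatingMinimization f K L x y) (hK : IsCompact K)
    (hL : IsCompact L) (hf : Continuous (uncurry f)) :
    Tendsto (fun n ↦ f (x n) (y n)) atTop (𝓝 (⨅ n, f (x n) (y n))) := by
  refine tendsto_atTop_ciInf h.antitone ((hK.prod hL).bddBelow_image hf.continuousOn |>.mono ?_)
  rintro _ ⟨n, rfl⟩
  exact ⟨(x n, y n), mk_mem_prod (h.mem_left n) (h.mem_right n), rfl⟩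

theorem exists_isMinOn_left_right_tendsto [FirstCountableTopology E] [FirstCountableTopology F]
    (h : IsAlternatingMinimization f K L x y) (hK : IsCompact K) (hL : IsCompact L)
    (hf : Continuous (uncurry f)) :
    ∃ a ∈ K, ∃ b ∈ L, IsMinOn (f · b) K a ∧ IsMinOn (f a) L b ∧
      Tendsto (fun n ↦ f (x n) (y n)) atTop (𝓝 (f a b)) := by
  obtain ⟨⟨a, b⟩, ⟨ha, hb⟩, φ, hφ, hlim⟩ :=
    (hK.prod hL).tendsto_subseq (x := fun n ↦ (x (n + 1), y n))
      fun n ↦ mk_mem_prod (h.mem_left (n + 1)) (h.mem_right n)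
  have hxφ : Tendsto (fun n ↦ x (φ n + 1)) atTop (𝓝 a) := (continuous_fst.tendsto _).comp hlim
  have hyφ : Tendsto (fun n ↦ y (φ n)) atTop (𝓝 b) := (continuous_snd.tendsto _).comp hlim
  have hvalues := h.tendsto_iInf hK hL hf
  have hvalues_shift (k : ℕ) : Tendsto (fun n ↦ f (x (φ n + k)) (y (φ n + k))) atTop
      (𝓝 (⨅ n, f (x n) (y n))) :=
    hvalues.comp ((tendsto_add_atTop_nat k).comp hφ.tendsto_atTop)
  have hmid : Tendsto (fun n ↦ f (x (φ n + 1)) (y (φ n))) atTop (𝓝 (f a b)) :=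
    (hf.tendsto (a, b)).comp hlim
  -- the intermediate values are squeezed between two consecutive values of the iteration
  have hlimit : f a b = ⨅ n, f (x n) (y n) := by
    refine tendsto_nhds_unique hmid (tendsto_of_tendsto_of_tendsto_of_le_of_le
      (hvalues_shift 1) (hvalues_shift 0) (fun n ↦ ?_) (fun n ↦ ?_))
    · exact h.isMinOn_right (φ n + 1) (h.mem_right (φ n))
    · exact h.isMinOn_left (φ n) (h.mem_left (φ n))
  refine ⟨a, ha, b, hb, fun u hu ↦ ?_, fun v hv ↦ ?_, hlimit ▸ hvalues⟩
  · exact le_of_tendsto_of_tendsto' hmid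
      ((hf.tendsto (u, b)).comp (tendsto_const_nhds.prodMk_nhds hyφ))
      fun n ↦ h.isMinOn_left (φ n) hu
  · change f a b ≤ f a v
    rw [hlimit]
    exact le_of_tendsto_of_tendsto' (hvalues_shift 1)
      ((hf.tendsto (a, v)).comp (hxφ.prodMk_nhds tendsto_const_nhds))
      fun n ↦ h.isMinOn_right (φ n + 1) hv

end IsAlternatingMinimization

theorem alternating_minimization_converges_to_global_min_general
    {p q : ℕ}
    (K : Set (EuclideanSpace ℝ (Fin p))) (L : Set (EuclideanSpace ℝ (Fin q)))
    (hKcpt : IsCompact K) (hKcvx : Convex ℝ K)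
    (hLcpt : IsCompact L) (hLcvx : Convex ℝ L)
    (f : EuclideanSpace ℝ (Fin p) → EuclideanSpace ℝ (Fin q) → ℝ)
    (hfConvex : ConvexOn ℝ Set.univ (Function.uncurry f))
    (hfSmooth : ContDiff ℝ 1 (Function.uncurry f))
    (x : ℕ → EuclideanSpace ℝ (Fin p)) (y : ℕ → EuclideanSpace ℝ (Fin q))
    (hxK : ∀ ℓ, 1 ≤ ℓ → x ℓ ∈ K) (hyL : ∀ ℓ, 1 ≤ ℓ → y ℓ ∈ L)
    -- `y^ℓ` minimizes `f(x^ℓ, ·)` over `L`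
    (hymin : ∀ ℓ, 1 ≤ ℓ → ∀ y' ∈ L, f (x ℓ) (y ℓ) ≤ f (x ℓ) y')
    -- `x^{ℓ+1}` minimizes `f(·, y^ℓ)` over `K`
    (hxmin : ∀ ℓ, 1 ≤ ℓ → ∀ x' ∈ K, f (x (ℓ + 1)) (y ℓ) ≤ f x' (y ℓ)) :
    ∃ m : ℝ,
      IsLeast {c : ℝ | ∃ x' ∈ K, ∃ y' ∈ L, c = f x' y'} m ∧
      IsGLB {c : ℝ | ∃ ℓ, 1 ≤ ℓ ∧ c = f (x ℓ) (y ℓ)} m := by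
  have hseq : IsAlternatingMinimization f K L (fun n ↦ x (n + 1)) (fun n ↦ y (n + 1)) :=
    ⟨fun n ↦ hxK _ n.succ_pos, fun n ↦ hyL _ n.succ_pos, fun n ↦ hymin _ n.succ_pos,
      fun n ↦ hxmin _ n.succ_pos⟩
  obtain ⟨a, ha, b, hb, hleft, hright, hlim⟩ :=
    hseq.exists_isMinOn_left_right_tendsto hKcpt hLcpt hfSmooth.continuous
  have hglobal : IsMinOn (uncurry f) (K ×ˢ L) (a, b) :=
    (hfConvex.subset (subset_univ _) (hKcvx.prod hLcvx)).isMinOn_prod_of_isMinOn_left_right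
      ((hfSmooth.differentiable one_ne_zero _).hasFDerivAt) ha hb hleft hright
  have hvalues : {c : ℝ | ∃ ℓ, 1 ≤ ℓ ∧ c = f (x ℓ) (y ℓ)} =
      range fun n ↦ f (x (n + 1)) (y (n + 1)) := by
    ext c
    constructor
    · rintro ⟨_ | n, hn, rfl⟩
      · exact absurd hn (by norm_num)
      · exact ⟨n, rfl⟩
    · rintro ⟨n, rfl⟩
      exact ⟨n + 1, n.succ_pos, rfl⟩
  refine ⟨f a b, ⟨⟨a, ha, b, hb, rfl⟩, ?_⟩, hvalues ▸ isGLB_of_tendsto_atTop hseq.antitone hlim⟩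
  rintro _ ⟨u, hu, v, hv, rfl⟩
  exact hglobal (mk_mem_prod hu hv)

/-- General form of the convergence theorem: for a jointly convex, continuously
differentiable `f : ℝ^p × ℝ^q → ℝ` and nonempty compact convex sets `K ⊆ ℝ^p`,
`L ⊆ ℝ^q`, alternating (block-coordinate) minimization — `y^ℓ` minimizes `f(x^ℓ, ·)`
over `L` and `x^{ℓ+1}` minimizes `f(·, y^ℓ)` over `K` — satisfies
`inf_{ℓ ≥ 1} f(x^ℓ, y^ℓ) = min_{(x,y) ∈ K × L} f(x,y)`. -/
theorem alternating_minimization_converges_to_global_min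
    {p q : ℕ}
    (K : Set (EuclideanSpace ℝ (Fin p))) (L : Set (EuclideanSpace ℝ (Fin q)))
    (hKne : K.Nonempty) (hKcpt : IsCompact K) (hKcvx : Convex ℝ K)
    (hLne : L.Nonempty) (hLcpt : IsCompact L) (hLcvx : Convex ℝ L)
    (f : EuclideanSpace ℝ (Fin p) → EuclideanSpace ℝ (Fin q) → ℝ)
    (hfConvex : ConvexOn ℝ Set.univ (Function.uncurry f))
    (hfSmooth : ContDiff ℝ 1 (Function.uncurry f))
    (x : ℕ → EuclideanSpace ℝ (Fin p)) (y : ℕ → EuclideanSpace ℝ (Fin q))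
    (hxK : ∀ ℓ, 1 ≤ ℓ → x ℓ ∈ K) (hyL : ∀ ℓ, 1 ≤ ℓ → y ℓ ∈ L)
    -- `y^ℓ` minimizes `f(x^ℓ, ·)` over `L`
    (hymin : ∀ ℓ, 1 ≤ ℓ → ∀ y' ∈ L, f (x ℓ) (y ℓ) ≤ f (x ℓ) y')
    -- `x^{ℓ+1}` minimizes `f(·, y^ℓ)` over `K`
    (hxmin : ∀ ℓ, 1 ≤ ℓ → ∀ x' ∈ K, f (x (ℓ + 1)) (y ℓ) ≤ f x' (y ℓ)) :
    ∃ m : ℝ,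
      IsLeast {c : ℝ | ∃ x' ∈ K, ∃ y' ∈ L, c = f x' y'} m ∧
      IsGLB {c : ℝ | ∃ ℓ, 1 ≤ ℓ ∧ c = f (x ℓ) (y ℓ)} m :=
  alternating_minimization_converges_to_global_min_general K L hKcpt hKcvx hLcpt hLcvx f hfConvex
    hfSmooth x y hxK hyL hymin hxmin
end

section
/- (Accumulation points of alternating minimization are blockwise optimal.) Let K ⊆ ℝ^p and L ⊆ ℝ^q be nonempty compact sets and let f : ℝ^p × ℝ^q → ℝ be continuous. Suppose sequences (x^ℓ)_{ℓ≥1} ⊆ K and (y^ℓ)_{ℓ≥1} ⊆ L satisfy, for every ℓ ≥ 1: y^ℓ minimizes f(x^ℓ, ·) over L and x^{ℓ+1} minimizes f(·, y^ℓ) over K. Then every accumulation point (x̂, ŷ) ∈ K × L of the sequence ((x^ℓ, y^ℓ))_{ℓ≥1} is blockwise optimal: x̂ minimizes f(·, ŷ) over K and ŷ minimizes f(x̂, ·) over L, and f(x̂, ŷ) = inf_{ℓ ≥ 1} f(x^ℓ, y^ℓ). -/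
/-!
Each half-step of alternating minimization can only lower the objective, so the values
`f (x ℓ) (y ℓ)` decrease; along the subsequence they converge to `f x̂ ŷ`, which is therefore
their infimum. Blockwise optimality follows by passing to the limit in the two minimality
conditions: for `y'`, directly along `φ j`; for `x'`, through the intermediate value
`f (x (φ j + 1)) (y (φ j))`, which lies between the infimum and `f x' (y (φ j))`.
-/

open Filter Topology Set

theorem le_of_antitoneOn_of_tendsto_comp {α : Type*} [Preorder α] [TopologicalSpace α]
    [ClosedIicTopology α] {g : ℕ → α} {n : ℕ} {φ : ℕ → ℕ} {c : α}
    (hg : AntitoneOn g (Ici n)) (hφ : Tendsto φ atTop atTop)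
    (hc : Tendsto (g ∘ φ) atTop (𝓝 c)) {ℓ : ℕ} (hℓ : n ≤ ℓ) : c ≤ g ℓ :=
  le_of_tendsto hc <| (hφ.eventually_ge_atTop ℓ).mono fun _ hj =>
    hg hℓ (hℓ.trans hj) hj

structure IsAlternatingMinimization_s9 {α β : Type*} (f : α → β → ℝ) (K : Set α) (L : Set β)
    (x : ℕ → α) (y : ℕ → β) : Prop where
  x_mem : ∀ ℓ, 1 ≤ ℓ → x ℓ ∈ K
  y_mem : ∀ ℓ, 1 ≤ ℓ → y ℓ ∈ L
  y_min : ∀ ℓ, 1 ≤ ℓ → ∀ y' ∈ L, f (x ℓ) (y ℓ) ≤ f (x ℓ) y'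
  x_min : ∀ ℓ, 1 ≤ ℓ → ∀ x' ∈ K, f (x (ℓ + 1)) (y ℓ) ≤ f x' (y ℓ)

namespace IsAlternatingMinimization_s9

variable {α β : Type*} {f : α → β → ℝ} {K : Set α} {L : Set β} {x : ℕ → α} {y : ℕ → β}

theorem value_succ_le_half_step (h : IsAlternatingMinimization_s9 f K L x y) {ℓ : ℕ}
    (hℓ : 1 ≤ ℓ) : f (x (ℓ + 1)) (y (ℓ + 1)) ≤ f (x (ℓ + 1)) (y ℓ) :=
  h.y_min (ℓ + 1) (by omega) (y ℓ) (h.y_mem ℓ hℓ)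

theorem antitoneOn_value (h : IsAlternatingMinimization_s9 f K L x y) :
    AntitoneOn (fun ℓ => f (x ℓ) (y ℓ)) (Ici 1) :=
  antitoneOn_nat_Ici_of_succ_le fun ℓ hℓ =>
    (h.value_succ_le_half_step hℓ).trans (h.x_min ℓ hℓ (x ℓ) (h.x_mem ℓ hℓ))

variable {φ : ℕ → ℕ} {c : ℝ}

theorem le_value_of_tendsto_subseq (h : IsAlternatingMinimization_s9 f K L x y)
    (hφ : Tendsto φ atTop atTop) (hc : Tendsto (fun j => f (x (φ j)) (y (φ j))) atTop (𝓝 c))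
    {ℓ : ℕ} (hℓ : 1 ≤ ℓ) : c ≤ f (x ℓ) (y ℓ) :=
  le_of_antitoneOn_of_tendsto_comp h.antitoneOn_value hφ hc hℓ

theorem le_of_tendsto_subseq_left [TopologicalSpace β]
    (h : IsAlternatingMinimization_s9 f K L x y) (hφ : Tendsto φ atTop atTop)
    (hφone : ∀ j, 1 ≤ φ j) (hc : Tendsto (fun j => f (x (φ j)) (y (φ j))) atTop (𝓝 c))
    {yhat : β} (hy : Tendsto (y ∘ φ) atTop (𝓝 yhat)) {x' : α} (hx' : x' ∈ K)
    (hfx' : Continuous (f x')) : c ≤ f x' yhat := by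
  refine ge_of_tendsto ((hfx'.tendsto yhat).comp hy) (Eventually.of_forall fun j => ?_)
  calc c ≤ f (x (φ j + 1)) (y (φ j + 1)) := h.le_value_of_tendsto_subseq hφ hc (by omega)
    _ ≤ f (x (φ j + 1)) (y (φ j)) := h.value_succ_le_half_step (hφone j)
    _ ≤ f x' (y (φ j)) := h.x_min (φ j) (hφone j) x' hx'

theorem le_of_tendsto_subseq_right [TopologicalSpace α]
    (h : IsAlternatingMinimization_s9 f K L x y) (hφone : ∀ j, 1 ≤ φ j)
    (hc : Tendsto (fun j => f (x (φ j)) (y (φ j))) atTop (𝓝 c))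
    {xhat : α} (hx : Tendsto (x ∘ φ) atTop (𝓝 xhat)) {y' : β} (hy' : y' ∈ L)
    (hfy' : Continuous (f · y')) : c ≤ f xhat y' :=
  le_of_tendsto_of_tendsto' hc ((hfy'.tendsto xhat).comp hx) fun j =>
    h.y_min (φ j) (hφone j) y' hy'

end IsAlternatingMinimization_s9

theorem alternating_minimization_accumulation_point_blockwise_optimal_general
    {p q : ℕ}
    (K : Set (EuclideanSpace ℝ (Fin p))) (L : Set (EuclideanSpace ℝ (Fin q)))
    (f : EuclideanSpace ℝ (Fin p) → EuclideanSpace ℝ (Fin q) → ℝ)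
    (hfCont : Continuous (Function.uncurry f))
    (x : ℕ → EuclideanSpace ℝ (Fin p)) (y : ℕ → EuclideanSpace ℝ (Fin q))
    (hxK : ∀ ℓ, 1 ≤ ℓ → x ℓ ∈ K) (hyL : ∀ ℓ, 1 ≤ ℓ → y ℓ ∈ L)
    -- `y^ℓ` minimizes `f(x^ℓ, ·)` over `L`
    (hymin : ∀ ℓ, 1 ≤ ℓ → ∀ y' ∈ L, f (x ℓ) (y ℓ) ≤ f (x ℓ) y')
    -- `x^{ℓ+1}` minimizes `f(·, y^ℓ)` over `K`
    (hxmin : ∀ ℓ, 1 ≤ ℓ → ∀ x' ∈ K, f (x (ℓ + 1)) (y ℓ) ≤ f x' (y ℓ))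
    (xhat : EuclideanSpace ℝ (Fin p)) (yhat : EuclideanSpace ℝ (Fin q))
    -- `(x̂, ŷ)` is an accumulation point of the sequence `((x^ℓ, y^ℓ))_{ℓ ≥ 1}`
    (φ : ℕ → ℕ) (hφmono : StrictMono φ) (hφone : ∀ j, 1 ≤ φ j)
    (hacc : Filter.Tendsto (fun j => (x (φ j), y (φ j))) Filter.atTop
      (nhds (xhat, yhat))) :
    (∀ x' ∈ K, f xhat yhat ≤ f x' yhat) ∧
    (∀ y' ∈ L, f xhat yhat ≤ f xhat y') ∧
    IsGLB {c : ℝ | ∃ ℓ, 1 ≤ ℓ ∧ c = f (x ℓ) (y ℓ)} (f xhat yhat) := by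
  have h : IsAlternatingMinimization_s9 f K L x y := ⟨hxK, hyL, hymin, hxmin⟩
  have hφ := hφmono.tendsto_atTop
  have hconv : Tendsto (fun j => f (x (φ j)) (y (φ j))) atTop (𝓝 (f xhat yhat)) :=
    (hfCont.tendsto (xhat, yhat)).comp hacc
  refine ⟨fun x' hx' => h.le_of_tendsto_subseq_left hφ hφone hconv
      ((continuous_snd.tendsto _).comp hacc) hx' (hfCont.uncurry_left x'),
    fun y' hy' => h.le_of_tendsto_subseq_right hφone hconv
      ((continuous_fst.tendsto _).comp hacc) hy' (hfCont.uncurry_right y'),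
    isGLB_of_mem_closure ?_ (mem_closure_of_tendsto hconv ?_)⟩
  · rintro _ ⟨ℓ, hℓ, rfl⟩
    exact h.le_value_of_tendsto_subseq hφ hconv hℓ
  · exact Eventually.of_forall fun j => ⟨φ j, hφone j, rfl⟩

/-- Accumulation points of alternating minimization are blockwise optimal: for a
continuous `f : ℝ^p × ℝ^q → ℝ` and nonempty compact `K ⊆ ℝ^p`, `L ⊆ ℝ^q`, if
`y^ℓ` minimizes `f(x^ℓ, ·)` over `L` and `x^{ℓ+1}` minimizes `f(·, y^ℓ)` over `K`
for all `ℓ ≥ 1`, then every accumulation point `(x̂, ŷ) ∈ K × L` of the sequence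
`((x^ℓ, y^ℓ))_{ℓ ≥ 1}` is blockwise optimal and satisfies
`f(x̂, ŷ) = inf_{ℓ ≥ 1} f(x^ℓ, y^ℓ)`. -/
theorem alternating_minimization_accumulation_point_blockwise_optimal
    {p q : ℕ}
    (K : Set (EuclideanSpace ℝ (Fin p))) (L : Set (EuclideanSpace ℝ (Fin q)))
    (hKne : K.Nonempty) (hKcpt : IsCompact K)
    (hLne : L.Nonempty) (hLcpt : IsCompact L)
    (f : EuclideanSpace ℝ (Fin p) → EuclideanSpace ℝ (Fin q) → ℝ)
    (hfCont : Continuous (Function.uncurry f))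
    (x : ℕ → EuclideanSpace ℝ (Fin p)) (y : ℕ → EuclideanSpace ℝ (Fin q))
    (hxK : ∀ ℓ, 1 ≤ ℓ → x ℓ ∈ K) (hyL : ∀ ℓ, 1 ≤ ℓ → y ℓ ∈ L)
    -- `y^ℓ` minimizes `f(x^ℓ, ·)` over `L`
    (hymin : ∀ ℓ, 1 ≤ ℓ → ∀ y' ∈ L, f (x ℓ) (y ℓ) ≤ f (x ℓ) y')
    -- `x^{ℓ+1}` minimizes `f(·, y^ℓ)` over `K`
    (hxmin : ∀ ℓ, 1 ≤ ℓ → ∀ x' ∈ K, f (x (ℓ + 1)) (y ℓ) ≤ f x' (y ℓ))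
    (xhat : EuclideanSpace ℝ (Fin p)) (yhat : EuclideanSpace ℝ (Fin q))
    (hxhat : xhat ∈ K) (hyhat : yhat ∈ L)
    -- `(x̂, ŷ)` is an accumulation point of the sequence `((x^ℓ, y^ℓ))_{ℓ ≥ 1}`
    (φ : ℕ → ℕ) (hφmono : StrictMono φ) (hφone : ∀ j, 1 ≤ φ j)
    (hacc : Filter.Tendsto (fun j => (x (φ j), y (φ j))) Filter.atTop
      (nhds (xhat, yhat))) :
    (∀ x' ∈ K, f xhat yhat ≤ f x' yhat) ∧
    (∀ y' ∈ L, f xhat yhat ≤ f xhat y') ∧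
    IsGLB {c : ℝ | ∃ ℓ, 1 ≤ ℓ ∧ c = f (x ℓ) (y ℓ)} (f xhat yhat) :=
  alternating_minimization_accumulation_point_blockwise_optimal_general K L f hfCont x y hxK hyL
    hymin hxmin xhat yhat φ hφmono hφone hacc
end
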